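/- The shifted Hankel determinant of the q-exponential polynomials satisfies det(φ_{i+j+1}(x))_{i,j=0}^{n-1} = x^{C(n+1,2)} · q^{C(n+1,3)} · product_{j=0}^{n-1} [j]!. -/
import Mathlib


open Finset Matrix

/-- The q-integer `[n] = 1 + q + ... + q^(n-1)`. -/
def qint {R : Type*} [CommRing R] (q : R) (n : ℕ) : R := ∑ i ∈ Finset.range n, q ^ i

/-- The q-factorial `[n]! = [1][2]⋯[n]`. -/
def qfact {R : Type*} [CommRing R] (q : R) (n : ℕ) : R := ∏ i ∈ Finset.range n, qint q (i + 1)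

/-- The Gaussian binomial coefficient, via the q-Pascal recurrence. -/
def qbinom {R : Type*} [CommRing R] (q : R) : ℕ → ℕ → R
  | 0, 0 => 1
  | 0, _ + 1 => 0
  | _ + 1, 0 => 1
  | n + 1, k + 1 => qbinom q n k + q ^ (k + 1) * qbinom q n (k + 1)

/-- The q-Stirling numbers of the second kind:
`S[n,k] = S[n-1,k-1] + [k]·S[n-1,k]`, `S[0,k] = δ_{k0}`, `S[n,0] = δ_{n0}`. -/
def qStirling2 {R : Type*} [CommRing R] (q : R) : ℕ → ℕ → R
  | 0, 0 => 1
  | 0, _ + 1 => 0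
  | _ + 1, 0 => 0
  | n + 1, k + 1 => qStirling2 q n k + qint q (k + 1) * qStirling2 q n (k + 1)

/-- The q-Pochhammer symbol `(a;q)_m = ∏_{j<m} (1 - q^j a)`. -/
def qpoch {R : Type*} [CommRing R] (q a : R) (m : ℕ) : R := ∏ j ∈ Finset.range m, (1 - q ^ j * a)


section Aux
variable {R : Type*} [CommRing R] (q x : R)

lemma qint_add (a b : ℕ) : qint q (a + b) = qint q a + q ^ a * qint q b := by
  simp only [qint, Finset.sum_range_add, pow_add, ← Finset.mul_sum]

lemma qStirling2_eq_zero : ∀ n k, n < k → qStirling2 q n k = 0 := by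
  intro n
  induction n with
  | zero => intro k hk; match k, hk with | k+1, _ => rfl
  | succ n ih =>
    intro k hk
    match k, hk with
    | k+1, hk =>
      show qStirling2 q n k + qint q (k+1) * qStirling2 q n (k+1) = 0
      rw [ih k (by omega), ih (k+1) (by omega)]; ring

lemma qbinom_zero_right : ∀ n, qbinom q n 0 = 1 := by
  intro n; cases n <;> rfl

lemma qbinom_eq_zero : ∀ n k, n < k → qbinom q n k = 0 := by
  intro n
  induction n with
  | zero => intro k hk; match k, hk with | k+1, _ => rfl
  | succ n ih =>
    intro k hk
    match k, hk with
    | k+1, hk =>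
      show qbinom q n k + q^(k+1) * qbinom q n (k+1) = 0
      rw [ih k (by omega), ih (k+1) (by omega)]; ring

lemma qbinom_diag : ∀ n, qbinom q n n = 1 := by
  intro n
  induction n with
  | zero => rfl
  | succ n ih =>
    show qbinom q n n + q^(n+1) * qbinom q n (n+1) = 1
    rw [ih, qbinom_eq_zero q n (n+1) (by omega)]; ring

lemma qbinom_absorb : ∀ a, (∀ k, qint q (k+1) * qbinom q (a+1) (k+1) = qint q (a+1) * qbinom q a k)
    ∧ (∀ k, qint q (a+1-k) * qbinom q (a+1) k = qint q (a+1) * qbinom q a k) := by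
  intro a
  induction a with
  | zero =>
    constructor
    · intro k
      show qint q (k+1) * (qbinom q 0 k + q^(k+1) * qbinom q 0 (k+1)) = qint q 1 * qbinom q 0 k
      cases k with
      | zero => simp [qbinom, qint]
      | succ k => show qint q (k+2) * ((0:R) + q^(k+2) * 0) = qint q 1 * 0; ring
    · intro k
      match k with
      | 0 => rfl
      | 1 =>
        have h0 : qbinom q 0 1 = (0:R) := rfl
        have h1 : qint q (0+1-1) = (0:R) := by norm_num [qint]
        rw [h0, h1]; ring
      | (k+2) =>
        have h0 : qbinom q 0 (k+2) = (0:R) := rfl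
        have h1 : qbinom q 1 (k+2) = (0:R) := qbinom_eq_zero q 1 (k+2) (by omega)
        rw [h0, h1]; ring
  | succ a ih =>
    obtain ⟨ih1, ih2⟩ := ih
    have H1 : ∀ k, qint q (k+1) * qbinom q (a+2) (k+1) = qint q (a+2) * qbinom q (a+1) k := by
      intro k
      show qint q (k+1) * (qbinom q (a+1) k + q^(k+1) * qbinom q (a+1) (k+1)) = _
      have e1 : qint q (k+1) * qbinom q (a+1) (k+1) = qint q (a+1-k) * qbinom q (a+1) k := by
        rw [ih1 k, ← ih2 k]
      by_cases hk : k ≤ a + 1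
      · have : qint q (a+2) = qint q (k+1) + q^(k+1) * qint q (a+1-k) := by
          rw [← qint_add q (k+1) (a+1-k)]; congr 1; omega
        rw [mul_add, mul_comm (q^(k+1)) (qbinom q (a+1) (k+1)), ← mul_assoc, e1, this]; ring
      · rw [qbinom_eq_zero q (a+1) k (by omega), qbinom_eq_zero q (a+1) (k+1) (by omega)]; ring
    refine ⟨H1, ?_⟩
    intro k
    match k with
    | 0 => show qint q (a+2) * qbinom q (a+2) 0 = qint q (a+2) * qbinom q (a+1) 0
           rw [qbinom_zero_right, qbinom_zero_right]
    | (k+1) =>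
      by_cases hk : k ≤ a
      · show qint q (a+2-(k+1)) * (qbinom q (a+1) k + q^(k+1) * qbinom q (a+1) (k+1)) = _
        have hn : a + 2 - (k+1) = a + 1 - k := by omega
        rw [hn]
        have e1 : qint q (a+1-k) * qbinom q (a+1) k = qint q (k+1) * qbinom q (a+1) (k+1) := by
          rw [ih2 k, ← ih1 k]
        have e2 : qint q (a+2) = qint q (k+1) + q^(k+1) * qint q (a+1-k) := by
          rw [← qint_add q (k+1) (a+1-k)]; congr 1; omega
        rw [mul_add, e1, e2]; ring
      · rw [qbinom_eq_zero q (a+1) (k+1) (by omega)]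
        by_cases hk2 : k = a + 1
        · subst hk2
          have : a + 2 - (a + 1 + 1) = 0 := by omega
          rw [this]
          show (0:R) * _ = _ * 0; ring
        · rw [qbinom_eq_zero q (a+2) (k+1) (by omega)]; ring

end Aux

def Lmat {R : Type*} [CommRing R] (q x : R) : ℕ → ℕ → R
  | 0, 0 => 1
  | 0, _+1 => 0
  | i+1, 0 => (x + qint q 1) * Lmat q x i 0 + q * qint q 1 * x * Lmat q x i 1
  | i+1, k+1 => Lmat q x i k + (q^(k+1) * x + qint q (k+2)) * Lmat q x i (k+1)
      + q^(k+2) * qint q (k+2) * x * Lmat q x i (k+2)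

section Aux2
variable {R : Type*} [CommRing R] (q x : R)

lemma Lmat_succ_zero (i : ℕ) : Lmat q x (i+1) 0
    = (x + qint q 1) * Lmat q x i 0 + q * qint q 1 * x * Lmat q x i 1 := rfl

lemma Lmat_succ_succ (i k : ℕ) : Lmat q x (i+1) (k+1)
    = Lmat q x i k + (q^(k+1) * x + qint q (k+2)) * Lmat q x i (k+1)
      + q^(k+2) * qint q (k+2) * x * Lmat q x i (k+2) := rfl

end Aux2

section Aux3
variable {R : Type*} [CommRing R] (q x : R)

lemma Lmat_eq_zero : ∀ i k, i < k → Lmat q x i k = 0 := by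
  intro i
  induction i with
  | zero => intro k hk; match k, hk with | k+1, _ => rfl
  | succ i ih =>
    intro k hk
    match k, hk with
    | k+1, hk =>
      rw [Lmat_succ_succ, ih k (by omega), ih (k+1) (by omega), ih (k+2) (by omega)]
      ring

lemma Lmat_diag : ∀ i, Lmat q x i i = 1 := by
  intro i
  induction i with
  | zero => rfl
  | succ i ih =>
    rw [Lmat_succ_succ, ih, Lmat_eq_zero q x i (i+1) (by omega),
      Lmat_eq_zero q x i (i+2) (by omega)]
    ring

lemma Lmat_formula : ∀ i k, Lmat q x i k
    = ∑ a ∈ Finset.range (i+1), qStirling2 q (i+1) (k+a+1) * qbinom q (k+a) k * x^a := by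
  intro i
  induction i with
  | zero =>
    intro k
    rw [Finset.sum_range_one]
    match k with
    | 0 => show (1:R) = qStirling2 q 1 1 * qbinom q 0 0 * x^0
           show (1:R) = (qStirling2 q 0 0 + qint q 1 * qStirling2 q 0 1) * qbinom q 0 0 * x^0
           show (1:R) = (1 + qint q 1 * 0) * 1 * x^0
           ring
    | k+1 => show (0:R) = qStirling2 q 1 (k+2) * qbinom q (k+1) (k+1) * x^0
             show (0:R) = (qStirling2 q 0 (k+1) + qint q (k+2) * qStirling2 q 0 (k+2))
                * qbinom q (k+1) (k+1) * x^0
             show (0:R) = ((0:R) + qint q (k+2) * 0) * qbinom q (k+1) (k+1) * x^0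
             ring
  | succ i ih =>
    -- helper sums
    have P0 : ∀ κ, ∑ a ∈ Finset.range (i+2),
        qStirling2 q (i+1) (κ+a+1) * qbinom q (κ+a) κ * x^a = Lmat q x i κ := by
      intro κ
      rw [Finset.sum_range_succ, qStirling2_eq_zero q (i+1) (κ+(i+1)+1) (by omega), ih κ]
      ring
    have P1 : ∀ κ, ∑ a ∈ Finset.range (i+2),
        qStirling2 q (i+1) (κ+a+1) * qbinom q (κ+a) (κ+1) * x^a = x * Lmat q x i (κ+1) := by
      intro κ
      rw [Finset.sum_range_succ', ih (κ+1)]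
      simp only [Nat.add_zero, pow_zero, mul_one]
      rw [qbinom_eq_zero q κ (κ+1) (by omega), mul_zero, add_zero, Finset.mul_sum]
      apply Finset.sum_congr rfl
      intro a _
      have h1 : κ + (a+1) + 1 = κ + 1 + a + 1 := by omega
      have h2 : κ + (a+1) = κ + 1 + a := by omega
      rw [h1, h2, pow_succ]
      ring
    intro k
    -- split the Stirling recurrence termwise
    have hsplit : ∀ m, (∑ a ∈ Finset.range (i+2),
          qStirling2 q (i+2) (m+a+1) * qbinom q (m+a) m * x^a)
        = (∑ a ∈ Finset.range (i+2), qStirling2 q (i+1) (m+a) * qbinom q (m+a) m * x^a)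
          + ∑ a ∈ Finset.range (i+2),
              qint q (m+a+1) * qStirling2 q (i+1) (m+a+1) * qbinom q (m+a) m * x^a := by
      intro m
      rw [← Finset.sum_add_distrib]
      apply Finset.sum_congr rfl
      intro a _
      show (qStirling2 q (i+1) (m+a) + qint q (m+a+1) * qStirling2 q (i+1) (m+a+1))
          * qbinom q (m+a) m * x^a = _
      ring
    have hT2 : ∀ m, (∑ a ∈ Finset.range (i+2),
          qint q (m+a+1) * qStirling2 q (i+1) (m+a+1) * qbinom q (m+a) m * x^a)
        = qint q (m+1) * Lmat q x i m + q^(m+1) * qint q (m+1) * (x * Lmat q x i (m+1)) := by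
      intro m
      have step : ∀ a, qint q (m+a+1) * qbinom q (m+a) m
          = qint q (m+1) * qbinom q (m+a) m + q^(m+1) * (qint q (m+1) * qbinom q (m+a) (m+1)) := by
        intro a
        have h1 := (qbinom_absorb q (m+a)).1 m
        -- qint q (m+1) * qbinom q (m+a+1) (m+1) = qint q (m+a+1) * qbinom q (m+a) m
        have h2 : qbinom q (m+a+1) (m+1) = qbinom q (m+a) m + q^(m+1) * qbinom q (m+a) (m+1) := rfl
        rw [← h1, h2]
        ring
      calc (∑ a ∈ Finset.range (i+2),
          qint q (m+a+1) * qStirling2 q (i+1) (m+a+1) * qbinom q (m+a) m * x^a)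
          = ∑ a ∈ Finset.range (i+2),
            (qint q (m+1) * (qStirling2 q (i+1) (m+a+1) * qbinom q (m+a) m * x^a)
             + q^(m+1) * qint q (m+1) * (qStirling2 q (i+1) (m+a+1) * qbinom q (m+a) (m+1) * x^a)) := by
            apply Finset.sum_congr rfl
            intro a _
            have := step a
            calc qint q (m+a+1) * qStirling2 q (i+1) (m+a+1) * qbinom q (m+a) m * x^a
                = (qint q (m+a+1) * qbinom q (m+a) m) * (qStirling2 q (i+1) (m+a+1) * x^a) := by ring
              _ = _ := by rw [this]; ring
        _ = qint q (m+1) * Lmat q x i m + q^(m+1) * qint q (m+1) * (x * Lmat q x i (m+1)) := by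
            rw [Finset.sum_add_distrib, ← Finset.mul_sum, ← Finset.mul_sum, P0 m, P1 m]
    match k with
    | 0 =>
      rw [Lmat_succ_zero, hsplit 0, hT2 0]
      -- T1 for k = 0
      have hT1 : (∑ a ∈ Finset.range (i+2),
          qStirling2 q (i+1) (0+a) * qbinom q (0+a) 0 * x^a) = x * Lmat q x i 0 := by
        rw [Finset.sum_range_succ', ih 0]
        simp only [Nat.zero_add, Nat.add_zero, pow_zero, mul_one]
        show (∑ a ∈ Finset.range (i+1), qStirling2 q (i+1) (a+1) * qbinom q (a+1) 0 * x^(a+1))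
            + qStirling2 q (i+1) 0 * qbinom q 0 0 = _
        have hz : qStirling2 q (i+1) 0 = (0:R) := rfl
        rw [hz, Finset.mul_sum]
        simp only [zero_mul, mul_one, add_zero]
        apply Finset.sum_congr rfl
        intro a _
        rw [qbinom_zero_right, qbinom_zero_right, pow_succ]
        ring
      rw [hT1]
      ring
    | k+1 =>
      rw [Lmat_succ_succ, hsplit (k+1), hT2 (k+1)]
      have hT1 : (∑ a ∈ Finset.range (i+2),
          qStirling2 q (i+1) (k+1+a) * qbinom q (k+1+a) (k+1) * x^a)
          = Lmat q x i k + q^(k+1) * (x * Lmat q x i (k+1)) := by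
        have hsp : ∀ a : ℕ, qbinom q (k+1+a) (k+1)
            = qbinom q (k+a) k + q^(k+1) * qbinom q (k+a) (k+1) := by
          intro a
          have : k+1+a = (k+a)+1 := by omega
          rw [this]
          rfl
        calc (∑ a ∈ Finset.range (i+2),
            qStirling2 q (i+1) (k+1+a) * qbinom q (k+1+a) (k+1) * x^a)
            = ∑ a ∈ Finset.range (i+2),
              (qStirling2 q (i+1) (k+a+1) * qbinom q (k+a) k * x^a
               + q^(k+1) * (qStirling2 q (i+1) (k+a+1) * qbinom q (k+a) (k+1) * x^a)) := by
              apply Finset.sum_congr rfl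
              intro a _
              rw [hsp a]
              have : k+1+a = k+a+1 := by omega
              rw [this]
              ring
          _ = Lmat q x i k + q^(k+1) * (x * Lmat q x i (k+1)) := by
              rw [Finset.sum_add_distrib, ← Finset.mul_sum, P0 k, P1 k]
      rw [hT1]
      ring

end Aux3

def dcoef {R : Type*} [CommRing R] (q x : R) (k : ℕ) : R :=
  x ^ (k+1) * q ^ ((k+1).choose 2) * qfact q k

section Aux4
variable {R : Type*} [CommRing R] (q x : R)

lemma qfact_succ (k : ℕ) : qfact q (k+1) = qfact q k * qint q (k+1) :=
  Finset.prod_range_succ _ _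

lemma dcoef_succ (k : ℕ) : dcoef q x (k+1) = q^(k+1) * qint q (k+1) * x * dcoef q x k := by
  unfold dcoef
  rw [qfact_succ]
  have h : (k+2).choose 2 = (k+1).choose 1 + (k+1).choose 2 := Nat.choose_succ_succ (k+1) 1
  rw [Nat.choose_one_right] at h
  rw [h, pow_add, pow_succ]
  ring

lemma phi_eq (m : ℕ) :
    (∑ k ∈ Finset.range (m+2), qStirling2 q (m+1) k * x^k) = x * Lmat q x m 0 := by
  rw [Finset.sum_range_succ', Lmat_formula, Finset.mul_sum]
  have hz : qStirling2 q (m+1) 0 = (0:R) := rfl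
  rw [hz, zero_mul, add_zero]
  apply Finset.sum_congr rfl
  intro a _
  rw [qbinom_zero_right, pow_succ]
  have : 0 + a + 1 = a + 1 := by omega
  rw [this]
  ring

lemma gram_step (i j N : ℕ) (hi : i < N) (hj : j < N) :
    (∑ k ∈ Finset.range (N+1), Lmat q x (i+1) k * dcoef q x k * Lmat q x j k)
    = ∑ k ∈ Finset.range (N+1), Lmat q x i k * dcoef q x k * Lmat q x (j+1) k := by
  set G : ℕ → R := fun k => q^(k+1) * qint q (k+1) * x * dcoef q x k
      * (Lmat q x i (k+1) * Lmat q x j k - Lmat q x i k * Lmat q x j (k+1)) with hG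
  have key0 : Lmat q x (i+1) 0 * dcoef q x 0 * Lmat q x j 0
      - Lmat q x i 0 * dcoef q x 0 * Lmat q x (j+1) 0 = G 0 := by
    simp only [hG]
    rw [Lmat_succ_zero, Lmat_succ_zero]
    simp [qint]
    ring
  have keyS : ∀ k, Lmat q x (i+1) (k+1) * dcoef q x (k+1) * Lmat q x j (k+1)
      - Lmat q x i (k+1) * dcoef q x (k+1) * Lmat q x (j+1) (k+1) = G (k+1) - G k := by
    intro k
    simp only [hG]
    rw [Lmat_succ_succ, Lmat_succ_succ, dcoef_succ]
    ring
  have tele : ∑ k ∈ Finset.range (N+1),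
      (Lmat q x (i+1) k * dcoef q x k * Lmat q x j k
       - Lmat q x i k * dcoef q x k * Lmat q x (j+1) k) = G N := by
    rw [Finset.sum_range_succ', key0]
    rw [Finset.sum_congr rfl (fun k _ => keyS k)]
    rw [Finset.sum_range_sub G]
    ring
  have hGN : G N = 0 := by
    simp only [hG]
    rw [Lmat_eq_zero q x i (N+1) (by omega), Lmat_eq_zero q x j (N+1) (by omega),
      Lmat_eq_zero q x i N (by omega)]
    ring
  rw [hGN] at tele
  rw [Finset.sum_sub_distrib, sub_eq_zero] at tele
  exact tele

lemma gram (i j N : ℕ) (hN : i + j + 2 ≤ N) :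
    (∑ k ∈ Finset.range N, Lmat q x i k * dcoef q x k * Lmat q x j k)
    = ∑ k ∈ Finset.range (i+j+2), qStirling2 q (i+j+1) k * x^k := by
  induction i generalizing j with
  | zero =>
    simp only [Nat.zero_add]
    rw [Finset.sum_eq_single 0]
    · have hd : dcoef q x 0 = x := by
        unfold dcoef
        norm_num [qfact]
      have h00 : Lmat q x 0 0 = (1:R) := rfl
      rw [h00, hd, one_mul, phi_eq]
    · intro b _ hb
      match b, hb with
      | b+1, _ =>
        have hz : Lmat q x 0 (b+1) = (0:R) := rfl
        rw [hz]; ring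
    · intro h
      exact absurd (Finset.mem_range.mpr (by omega)) h
  | succ i ih =>
    obtain ⟨N', rfl⟩ : ∃ N', N = N' + 1 := ⟨N - 1, by omega⟩
    rw [gram_step q x i j N' (by omega) (by omega)]
    have := ih (j+1) (by omega)
    rw [this]
    have e : i + (j+1) = i + 1 + j := by omega
    rw [e]

end Aux4

section Aux5
variable {R : Type*} [CommRing R] (q x : R)

lemma gram' (i j n : ℕ) (hi : i < n) (hj : j < n) :
    (∑ k ∈ Finset.range n, Lmat q x i k * dcoef q x k * Lmat q x j k)
    = ∑ k ∈ Finset.range (i+j+2), qStirling2 q (i+j+1) k * x^k := by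
  have hsub : (∑ k ∈ Finset.range n, Lmat q x i k * dcoef q x k * Lmat q x j k)
      = ∑ k ∈ Finset.range (max n (i+j+2)), Lmat q x i k * dcoef q x k * Lmat q x j k := by
    apply Finset.sum_subset
    · exact Finset.range_subset_range.mpr (le_max_left _ _)
    · intro k hk hk2
      rw [Finset.mem_range] at hk
      rw [Finset.mem_range] at hk2
      rw [Lmat_eq_zero q x i k (by omega)]
      ring
  rw [hsub, gram q x i j _ (le_trans (by omega) (le_max_right n (i+j+2)))]

lemma sum_choose1 (n : ℕ) : ∑ k ∈ Finset.range n, (k+1) = (n+1).choose 2 := by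
  induction n with
  | zero => rfl
  | succ n ih =>
    rw [Finset.sum_range_succ, ih]
    have h : (n+1+1).choose 2 = (n+1).choose 1 + (n+1).choose 2 := Nat.choose_succ_succ (n+1) 1
    rw [Nat.choose_one_right] at h
    omega

lemma sum_choose2 (n : ℕ) : ∑ k ∈ Finset.range n, (k+1).choose 2 = (n+1).choose 3 := by
  induction n with
  | zero => rfl
  | succ n ih =>
    rw [Finset.sum_range_succ, ih]
    have h : (n+1+1).choose 3 = (n+1).choose 2 + (n+1).choose 3 := Nat.choose_succ_succ (n+1) 2
    omega

end Aux5

/-- Shifted Hankel determinant of the q-exponential polynomials. -/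
theorem hankel_det_qexp_shifted {R : Type*} [CommRing R] (q x : R) (n : ℕ) :
    (Matrix.of fun i j : Fin n =>
        ∑ k ∈ Finset.range ((i : ℕ) + (j : ℕ) + 2),
          qStirling2 q ((i : ℕ) + (j : ℕ) + 1) k * x ^ k).det =
      x ^ (n + 1).choose 2 * q ^ (n + 1).choose 3 * ∏ j ∈ Finset.range n, qfact q j := by
  classical
  set A : Matrix (Fin n) (Fin n) R := Matrix.of fun i k : Fin n => Lmat q x (i:ℕ) (k:ℕ) with hA
  set D : Matrix (Fin n) (Fin n) R := Matrix.diagonal fun k : Fin n => dcoef q x (k:ℕ) with hD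
  have hM : (Matrix.of fun i j : Fin n =>
        ∑ k ∈ Finset.range ((i : ℕ) + (j : ℕ) + 2),
          qStirling2 q ((i : ℕ) + (j : ℕ) + 1) k * x ^ k) = A * D * Aᵀ := by
    ext i j
    rw [Matrix.mul_apply]
    simp only [hA, hD, Matrix.mul_diagonal, Matrix.transpose_apply, Matrix.of_apply]
    rw [Fin.sum_univ_eq_sum_range (fun k => Lmat q x (i:ℕ) k * dcoef q x k * Lmat q x (j:ℕ) k) n]
    rw [gram' q x (i:ℕ) (j:ℕ) n i.isLt j.isLt]
  rw [hM, Matrix.det_mul, Matrix.det_mul, Matrix.det_transpose]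
  have hdetA : A.det = 1 := by
    have htri : A.BlockTriangular OrderDual.toDual := by
      intro i j hij
      simp only [hA, Matrix.of_apply]
      exact Lmat_eq_zero q x (i:ℕ) (j:ℕ) (by exact_mod_cast hij)
    rw [Matrix.det_of_lowerTriangular A htri]
    apply Finset.prod_eq_one
    intro i _
    simp only [hA, Matrix.of_apply]
    exact Lmat_diag q x (i:ℕ)
  have hdetD : D.det = x ^ (n + 1).choose 2 * q ^ (n + 1).choose 3
      * ∏ j ∈ Finset.range n, qfact q j := by
    rw [hD, Matrix.det_diagonal]
    rw [Fin.prod_univ_eq_prod_range (fun k => dcoef q x k) n]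
    unfold dcoef
    rw [Finset.prod_mul_distrib, Finset.prod_mul_distrib, Finset.prod_pow_eq_pow_sum,
      Finset.prod_pow_eq_pow_sum, sum_choose1, sum_choose2]
  rw [hdetA, hdetD]
  ring
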